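/- arXiv:2209.04368 — 2 statements merged into one kernel-verified Lean document; each statement's English description precedes it below -/
import Mathlib

section
/- Let (b_n) be a sequence in (1,∞) such that b_n/n is nondecreasing. If limsup_{n→∞} (n log log n)/b_n > 0, then the series ∑_{n≥1} 1/(b_n log b_n) diverges. -/
/-!
Suppose the series converges, and fix `c > 0` with `c < n log log n / b n` for infinitely many `n`.
For such an `n` put `A = log log n`. Monotonicity of `b k / k` gives `b k ≤ k A / c` for `k ≤ n`,
so for `A / c ≤ k ≤ n` we get `b k log b k ≤ (2A / c) k log k`. Since `∑ 1 / (k log k)` grows like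
`log log`, the block `M < k ≤ n` with `M ≈ A / c` contributes at least `(c / 2A) (A - A / 2) = c / 4`:
for large `n` we have `M ≤ √(log n)`, so `log log M ≤ A / 2`. As `M` can be taken arbitrarily
large, this contradicts the Cauchy criterion.
-/

open MeasureTheory Filter Asymptotics Real Topology

/-- The Gauss measure on `(0,1]`, with density `1/(log 2 · (1+x))` w.r.t. Lebesgue measure. -/
noncomputable def gaussMeasure : Measure ℝ :=
  (volume.restrict (Set.Ioc (0:ℝ) 1)).withDensity
    (fun x => ENNReal.ofReal (1 / (Real.log 2 * (1 + x))))

/-- The first continued fraction digit `a(x) = ⌊1/x⌋`. -/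
noncomputable def cfDigit (x : ℝ) : ℕ := ⌊x⁻¹⌋₊

/-- The Gauss map `Sx = 1/x - ⌊1/x⌋`. -/
noncomputable def gaussMap (x : ℝ) : ℝ := Int.fract x⁻¹

/-- The prime digit function `a'(x)`: the first CF digit if it is prime, else `0`. -/
noncomputable def primeDigitVal (x : ℝ) : ℕ :=
  if (cfDigit x).Prime then cfDigit x else 0

lemma Real.log_sub_log_le_div {x y : ℝ} (hx : 0 < x) (hy : 0 < y) :
    log y - log x ≤ (y - x) / x := by
  rw [← log_div hy.ne' hx.ne', sub_div, div_self hx.ne']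
  exact log_le_sub_one_of_pos (div_pos hy hx)

lemma Real.log_log_add_one_sub_log_log_le {x : ℝ} (hx : 1 < x) :
    log (log (x + 1)) - log (log x) ≤ 1 / (x * log x) := by
  have hlogx : 0 < log x := log_pos hx
  calc log (log (x + 1)) - log (log x)
      ≤ (log (x + 1) - log x) / log x :=
        log_sub_log_le_div hlogx (log_pos (by linarith))
    _ ≤ ((x + 1 - x) / x) / log x := by
        gcongr
        exact log_sub_log_le_div (by linarith) (by linarith)
    _ = 1 / (x * log x) := by rw [add_sub_cancel_left, div_div]

lemma Real.log_log_sub_log_log_le_sum_Ioc {M n : ℕ} (hM : 1 ≤ M) (hMn : M ≤ n) :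
    log (log ((n : ℝ) + 1)) - log (log ((M : ℝ) + 1)) ≤
      ∑ k ∈ Finset.Ioc M n, 1 / ((k : ℝ) * log k) := by
  induction n, hMn using Nat.le_induction with
  | base => simp
  | succ n hMn ih =>
    rw [Finset.sum_Ioc_succ_top (by omega)]
    have hstep := log_log_add_one_sub_log_log_le (x := (n : ℝ) + 1)
      (by have : (1 : ℝ) ≤ n := by exact_mod_cast hM.trans hMn
          linarith)
    push_cast
    linarith

lemma Real.log_log_le_half_of_le_sqrt {x y : ℝ} (hx : 1 < x) (hxy : x ≤ √y) :
    log (log x) ≤ log y / 2 := by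
  have hy : 0 ≤ y := by
    by_contra! hy
    rw [sqrt_eq_zero'.mpr hy.le] at hxy
    linarith
  rw [← log_sqrt hy]
  exact log_le_log (log_pos hx) ((log_le_sub_one_of_pos (by linarith)).trans (by linarith))

lemma Real.eventually_add_log_div_le_sqrt (a c : ℝ) : ∀ᶠ x in atTop, a + log x / c ≤ √x := by
  have hsqrt : (fun x : ℝ => √x) = fun x => x ^ (1 / 2 : ℝ) := by
    funext x; exact sqrt_eq_rpow x
  have hlittle : (fun x => a + log x / c) =o[atTop] fun x : ℝ => √x := by
    simp_rw [hsqrt, div_eq_inv_mul]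
    refine IsLittleO.add ?_ ((isLittleO_log_rpow_atTop (by norm_num)).const_mul_left c⁻¹)
    exact isLittleO_const_left.mpr <| Or.inr <|
      tendsto_norm_atTop_atTop.comp (tendsto_rpow_atTop (by norm_num))
  filter_upwards [hlittle.bound one_pos, eventually_ge_atTop 0] with x hx hx0
  simpa [abs_of_nonneg (sqrt_nonneg x)] using (le_abs_self _).trans hx

lemma Summable.exists_sum_Ioc_lt {f : ℕ → ℝ} (hf : Summable f) {ε : ℝ} (hε : 0 < ε) :
    ∃ m₀, ∀ M ≥ m₀, ∀ n, ∑ k ∈ Finset.Ioc M n, f k < ε := by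
  obtain ⟨s, hs⟩ := hf.vanishing (Iio_mem_nhds hε)
  refine ⟨s.sup id, fun M hM n => hs _ ?_⟩
  refine Finset.disjoint_left.mpr fun k hk hks => ?_
  have hkM : k ≤ M := (Finset.le_sup (f := id) hks).trans hM
  exact (Finset.mem_Ioc.mp hk).1.not_ge hkM

lemma Real.one_div_mul_log_le_of_le_mul {β x L : ℝ} (hβ : 1 < β) (hL : 0 < L) (hLx : L ≤ x)
    (hβx : β ≤ x * L) : 1 / (2 * L) * (1 / (x * log x)) ≤ 1 / (β * log β) := by
  have hx : 0 < x := hL.trans_le hLx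
  have hlogβ : log β ≤ 2 * log x := by
    calc log β ≤ log (x * L) := log_le_log (by linarith) hβx
      _ = log x + log L := log_mul hx.ne' hL.ne'
      _ ≤ 2 * log x := by linarith [log_le_log hL hLx]
  have hβlogβ : 0 < β * log β := mul_pos (by linarith) (log_pos hβ)
  calc 1 / (2 * L) * (1 / (x * log x)) = 1 / ((x * L) * (2 * log x)) := by
        rw [one_div_mul_one_div]; ring_nf
    _ ≤ 1 / (β * log β) :=
        one_div_le_one_div_of_le hβlogβ (mul_le_mul hβx hlogβ (log_pos hβ).le (by positivity))

lemma sum_Ioc_one_div_mul_log_ge {b : ℕ → ℝ} (hb : ∀ n, 1 ≤ n → 1 < b n)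
    (hmono : ∀ m n : ℕ, 1 ≤ m → m ≤ n → b m / m ≤ b n / n) {L : ℝ} (hL : 0 < L) {M n : ℕ}
    (hLM : L ≤ M) (hMn : M ≤ n) (hbn : b n / n ≤ L) :
    (log (log ((n : ℝ) + 1)) - log (log ((M : ℝ) + 1))) / (2 * L) ≤
      ∑ k ∈ Finset.Ioc M n, 1 / (b k * log (b k)) := by
  have hM : 1 ≤ M := Nat.one_le_iff_ne_zero.mpr (by rintro rfl; simp at hLM; linarith)
  rw [div_eq_inv_mul, ← one_div]
  refine (mul_le_mul_of_nonneg_left (log_log_sub_log_log_le_sum_Ioc hM hMn)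
    (by positivity)).trans ?_
  rw [Finset.mul_sum]
  refine Finset.sum_le_sum fun k hk => ?_
  obtain ⟨hMk, hkn⟩ := Finset.mem_Ioc.mp hk
  have hk : (0 : ℝ) < k := by exact_mod_cast (show 0 < k by omega)
  refine one_div_mul_log_le_of_le_mul (hb k (by omega)) hL
    (hLM.trans (by exact_mod_cast hMk.le)) ?_
  rw [mul_comm, ← div_le_iff₀ hk]
  exact (hmono k n (by omega) hkn).trans hbn

lemma div_four_le_sum_Ioc_one_div_mul_log {b : ℕ → ℝ} (hb : ∀ n, 1 ≤ n → 1 < b n)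
    (hmono : ∀ m n : ℕ, 1 ≤ m → m ≤ n → b m / m ≤ b n / n) {c : ℝ} (hc : 0 < c) {M n : ℕ}
    (hlogn : 1 < log n) (hbn : c < n * log (log n) / b n) (hAM : log (log n) / c ≤ M)
    (hM : (M : ℝ) + 1 ≤ √(log n)) :
    c / 4 ≤ ∑ k ∈ Finset.Ioc M n, 1 / (b k * log (b k)) := by
  set A := log (log (n : ℝ))
  have hA : 0 < A := log_pos hlogn
  have hn0 : (0 : ℝ) < n := by
    by_contra! h
    rw [le_antisymm h n.cast_nonneg, log_zero] at hlogn
    linarith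
  have hbn' : b n / n ≤ A / c := by
    have hbpos : 0 < b n := by linarith [hb n (by exact_mod_cast hn0)]
    rw [div_le_div_iff₀ hn0 hc]
    linarith [(lt_div_iff₀ hbpos).mp hbn]
  have hMn : M ≤ n := by
    have h1 : √(log n) ≤ log n := sqrt_le_self_iff.mpr (Or.inr hlogn.le)
    have h2 : log n ≤ n - 1 := log_le_sub_one_of_pos hn0
    exact_mod_cast (show (M : ℝ) ≤ n by linarith)
  have hupper : A ≤ log (log ((n : ℝ) + 1)) :=
    log_le_log (by linarith) (log_le_log hn0 (by linarith))
  have hlower : log (log ((M : ℝ) + 1)) ≤ A / 2 :=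
    log_log_le_half_of_le_sqrt (by linarith [div_pos hA hc]) hM
  calc c / 4 = (A - A / 2) / (2 * (A / c)) := by field_simp; ring
    _ ≤ (log (log ((n : ℝ) + 1)) - log (log ((M : ℝ) + 1))) / (2 * (A / c)) := by
        gcongr
    _ ≤ _ := sum_Ioc_one_div_mul_log_ge hb hmono (div_pos hA hc) hAM hMn hbn'

theorem stmt_9 (b : ℕ → ℝ) (hb : ∀ n, 1 ≤ n → 1 < b n)
    (hmono : ∀ m n : ℕ, 1 ≤ m → m ≤ n → b m / m ≤ b n / n)
    (hsup : ∃ c : ℝ, 0 < c ∧ ∃ᶠ n : ℕ in atTop, c < (n:ℝ) * Real.log (Real.log n) / b n) :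
    ¬ Summable (fun n : ℕ => 1 / (b n * Real.log (b n))) := by
  intro hsum
  obtain ⟨c, hc, hfreq⟩ := hsup
  obtain ⟨m₀, hm₀⟩ := hsum.exists_sum_Ioc_lt (by positivity : 0 < c / 4)
  have hlog : Tendsto (fun n : ℕ => log n) atTop atTop :=
    tendsto_log_atTop.comp tendsto_natCast_atTop_atTop
  obtain ⟨n, hn, hlogn, hsqrt⟩ := (hfreq.and_eventually ((hlog.eventually_gt_atTop 1).and
    (hlog.eventually (eventually_add_log_div_le_sqrt (m₀ + 2) c)))).exists
  set M := m₀ + ⌈log (log (n : ℝ)) / c⌉₊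
  have hAM : log (log (n : ℝ)) / c ≤ M :=
    (Nat.le_ceil _).trans (by exact_mod_cast Nat.le_add_left _ _)
  have hM : (M : ℝ) + 1 ≤ √(log n) := by
    have := Nat.ceil_lt_add_one (div_pos (log_pos hlogn) hc).le
    push_cast [M]
    linarith
  have hblock := div_four_le_sum_Ioc_one_div_mul_log hb hmono hc hlogn hn hAM hM
  linarith [hm₀ M (Nat.le_add_right _ _) n]
end

section
/- For Lebesgue-almost every x ∈ (0,1], the Cesàro averages of the prime digits diverge: lim_{n→∞} (1/n) ∑_{k=1}^n a_k'(x) = ∞. -/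
/-!
Fix a digit `p` and let `N_p(n, x)` count its occurrences among the first `n` continued fraction
digits of `x`. The density `(1 + x)⁻¹` is invariant under the transfer operator of the Gauss map,
and penalising the branch of digit `p` by a factor `e⁻¹` makes that operator contract by
`1 - 2 r_p`, with `r_p ≍ p⁻²`. Hence `∫ e^{-N_p(n, x)} dx / (1 + x) ≤ (1 - 2 r_p)ⁿ`, and
Chernoff's bound with Borel–Cantelli gives `N_p(n, x) > r_p n` for all large `n`, for a.e. `x`.
Since `a' ≥ ∑_{p ∈ P} p · 1[a = p]` for every finite set `P` of primes, the Cesàro averages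
of `a'` are eventually at least `∑_{p ∈ P} p r_p`, which is unbounded because `∑ 1/p = ∞`.
-/

open MeasureTheory Filter Asymptotics Real Topology

open scoped ENNReal
open Set Function

lemma measurable_cfDigit : Measurable cfDigit :=
  Nat.measurable_floor.comp measurable_inv

lemma measurable_gaussMap : Measurable gaussMap :=
  measurable_fract.comp measurable_inv

noncomputable def gaussBranch (j : ℕ) (y : ℝ) : ℝ := ((j : ℝ) + 1 + y)⁻¹

lemma cfDigit_gaussBranch (j : ℕ) {y : ℝ} (hy : y ∈ Ico (0 : ℝ) 1) :
    cfDigit (gaussBranch j y) = j + 1 := by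
  rw [cfDigit, gaussBranch, inv_inv, Nat.floor_eq_iff (by linarith [hy.1])]
  push_cast
  constructor <;> linarith [hy.1, hy.2]

lemma gaussMap_gaussBranch (j : ℕ) {y : ℝ} (hy : y ∈ Ico (0 : ℝ) 1) :
    gaussMap (gaussBranch j y) = y := by
  rw [gaussMap, gaussBranch, inv_inv,
    show (j : ℝ) + 1 + y = ((j + 1 : ℕ) : ℝ) + y by push_cast; ring,
    Int.fract_natCast_add, Int.fract_eq_self.2 hy]

lemma hasDerivAt_gaussBranch (j : ℕ) {y : ℝ} (hy : 0 ≤ y) :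
    HasDerivAt (gaussBranch j) (-1 / ((j : ℝ) + 1 + y) ^ 2) y :=
  ((hasDerivAt_id' y).const_add ((j : ℝ) + 1)).inv (by positivity)

lemma injective_gaussBranch (j : ℕ) : Injective (gaussBranch j) := fun a b hab => by
  simpa [gaussBranch] using hab

lemma measurableSet_gaussBranch_image (j : ℕ) : MeasurableSet (gaussBranch j '' Ioo 0 1) :=
  measurable_image_of_fderivWithin measurableSet_Ioo
    (fun _ hy => (hasDerivAt_gaussBranch j hy.1.le).hasFDerivAt.hasFDerivWithinAt)
    (injective_gaussBranch j).injOn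

lemma pairwise_disjoint_gaussBranch_image :
    Pairwise (Disjoint on fun j => gaussBranch j '' Ioo 0 1) := by
  intro i j hij
  refine Set.disjoint_left.2 ?_
  rintro _ ⟨y, hy, rfl⟩ ⟨z, hz, hzy⟩
  have := cfDigit_gaussBranch j (Ioo_subset_Ico_self hz)
  rw [hzy, cfDigit_gaussBranch i (Ioo_subset_Ico_self hy)] at this
  omega

lemma Ioc_ae_eq_iUnion_gaussBranch_image :
    Ioc (0 : ℝ) 1 =ᵐ[volume] ⋃ j, gaussBranch j '' Ioo 0 1 := by
  refine ae_eq_set.2 ⟨?_, ?_⟩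
  · refine measure_mono_null ?_ ((countable_range fun n : ℕ => (n : ℝ)⁻¹).measure_zero volume)
    rintro x ⟨⟨hx0, hx1⟩, hx⟩
    have hfloor : 1 ≤ ⌊x⁻¹⌋₊ := Nat.le_floor (by simpa using one_le_inv₀ hx0 |>.2 hx1)
    obtain ⟨j, hj⟩ := Nat.exists_eq_add_of_le' hfloor
    by_contra hrange
    refine hx (mem_iUnion.2 ⟨j, x⁻¹ - ⌊x⁻¹⌋₊, ⟨?_, ?_⟩, ?_⟩)
    · exact sub_pos.2 ((Nat.floor_le (by positivity)).lt_of_ne fun h =>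
        hrange ⟨⌊x⁻¹⌋₊, by simp only [h, inv_inv]⟩)
    · linarith [Nat.lt_floor_add_one x⁻¹]
    · rw [gaussBranch, hj]
      push_cast
      rw [show (j : ℝ) + 1 + (x⁻¹ - (j + 1)) = x⁻¹ by ring, inv_inv]
  · refine measure_mono_null ?_ measure_empty
    rintro _ ⟨hx, hx'⟩
    obtain ⟨j, y, hy, rfl⟩ := mem_iUnion.1 hx
    have hy0 := hy.1
    exact hx' ⟨inv_pos.2 (by positivity),
      inv_le_one_of_one_le₀ (by linarith [j.cast_nonneg (α := ℝ)])⟩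

lemma lintegral_Ioc_eq_tsum_gaussBranch (F : ℝ → ℝ≥0∞) :
    ∫⁻ x in Ioc 0 1, F x =
      ∑' j : ℕ,
        ∫⁻ y in Ioo 0 1, ENNReal.ofReal (((j : ℝ) + 1 + y) ^ 2)⁻¹ * F (gaussBranch j y) := by
  rw [setLIntegral_congr Ioc_ae_eq_iUnion_gaussBranch_image,
    lintegral_iUnion measurableSet_gaussBranch_image pairwise_disjoint_gaussBranch_image]
  refine tsum_congr fun j => ?_
  rw [lintegral_image_eq_lintegral_abs_deriv_mul measurableSet_Ioo
    (fun y hy => (hasDerivAt_gaussBranch j hy.1.le).hasDerivWithinAt)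
    (injective_gaussBranch j).injOn]
  refine setLIntegral_congr_fun measurableSet_Ioo fun y hy => ?_
  rw [abs_div, abs_neg, abs_one, abs_of_nonneg (by positivity), one_div]

noncomputable def gaussDensity (x : ℝ) : ℝ≥0∞ := ENNReal.ofReal (1 + x)⁻¹

/-- `|h_j'(y)| · (1 + h_j y)⁻¹` for the inverse branch `h_j = gaussBranch j`. -/
noncomputable def transferWeight (j : ℕ) (y : ℝ) : ℝ := (((j : ℝ) + 1 + y) * ((j : ℝ) + 2 + y))⁻¹

lemma transferWeight_nonneg (j : ℕ) {y : ℝ} (hy : 0 ≤ y) : 0 ≤ transferWeight j y := by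
  unfold transferWeight; positivity

/-- Invariance of the Gauss density: the series telescopes, the `j`-th term being
`(j + 1 + y)⁻¹ - (j + 2 + y)⁻¹`. -/
lemma hasSum_transferWeight {y : ℝ} (hy : 0 ≤ y) :
    HasSum (fun j => transferWeight j y) (1 + y)⁻¹ := by
  set f : ℕ → ℝ := fun j => ((j : ℝ) + 1 + y)⁻¹
  have hterm : ∀ j, transferWeight j y = f j - f (j + 1) := fun j => by
    simp only [transferWeight, f]
    push_cast
    field_simp
    ring
  have hf : Tendsto f atTop (𝓝 0) :=
    tendsto_inv_atTop_zero.comp <| tendsto_atTop_add_const_right _ y <|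
      tendsto_atTop_add_const_right _ 1 tendsto_natCast_atTop_atTop
  rw [hasSum_iff_tendsto_nat_of_nonneg (fun j => transferWeight_nonneg j hy)]
  simp only [hterm, Finset.sum_range_sub']
  simpa [f] using (tendsto_const_nhds (x := f 0)).sub hf

lemma inv_sq_mul_gaussDensity_gaussBranch (j : ℕ) {y : ℝ} (hy : 0 ≤ y) :
    ENNReal.ofReal (((j : ℝ) + 1 + y) ^ 2)⁻¹ * gaussDensity (gaussBranch j y) =
      ENNReal.ofReal (transferWeight j y) := by
  rw [gaussDensity, ← ENNReal.ofReal_mul (by positivity), gaussBranch, transferWeight]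
  congr 1
  field_simp
  ring

/-- The transfer operator of the Gauss map with respect to the density `(1 + x)⁻¹`. -/
lemma lintegral_comp_gaussMap (φ : ℕ → ℝ≥0∞) {G : ℝ → ℝ≥0∞} (hG : Measurable G) :
    ∫⁻ x in Ioc 0 1, φ (cfDigit x) * G (gaussMap x) * gaussDensity x =
      ∫⁻ y in Ioo 0 1, (∑' j, φ (j + 1) * ENNReal.ofReal (transferWeight j y)) * G y := by
  have hmeas : ∀ j, AEMeasurable (fun y => φ (j + 1) * ENNReal.ofReal (transferWeight j y) * G y)
      (volume.restrict (Ioo 0 1)) :=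
    fun j => by unfold transferWeight; fun_prop
  calc ∫⁻ x in Ioc 0 1, φ (cfDigit x) * G (gaussMap x) * gaussDensity x
      = ∑' j, ∫⁻ y in Ioo 0 1, φ (j + 1) * ENNReal.ofReal (transferWeight j y) * G y := by
        rw [lintegral_Ioc_eq_tsum_gaussBranch]
        refine tsum_congr fun j => setLIntegral_congr_fun measurableSet_Ioo fun y hy => ?_
        have hy' := Ioo_subset_Ico_self hy
        rw [cfDigit_gaussBranch j hy', gaussMap_gaussBranch j hy',
          ← inv_sq_mul_gaussDensity_gaussBranch j hy.1.le]
        ring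
    _ = ∫⁻ y in Ioo 0 1, (∑' j, φ (j + 1) * ENNReal.ofReal (transferWeight j y)) * G y := by
        rw [← lintegral_tsum hmeas]
        simp_rw [ENNReal.tsum_mul_right]

/-- `2 r_p` is the loss `1 - e⁻¹` on the branch of digit `p` times `((p + 1) (p + 2))⁻¹`, a lower
bound for that branch's share `transferWeight (p - 1) y · (1 + y)` of the transfer operator. -/
noncomputable def digitRate (p : ℕ) : ℝ := (1 - exp (-1)) / (2 * (((p : ℝ) + 1) * ((p : ℝ) + 2)))

lemma digitRate_pos (p : ℕ) : 0 < digitRate p :=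
  div_pos (sub_pos.2 (exp_lt_one_iff.2 (by norm_num))) (by positivity)

lemma two_mul_digitRate_le_one (p : ℕ) : 2 * digitRate p ≤ 1 := by
  rw [digitRate, mul_div_assoc', div_le_one (by positivity)]
  nlinarith [exp_pos (-1), (p.cast_nonneg : (0 : ℝ) ≤ p)]

noncomputable def digitPenalty (p d : ℕ) : ℝ := if d = p then exp (-1) else 1

lemma digitPenalty_nonneg (p d : ℕ) : 0 ≤ digitPenalty p d := by
  unfold digitPenalty; split_ifs <;> positivity

lemma hasSum_digitPenalty_mul_transferWeight (q : ℕ) {y : ℝ} (hy : 0 ≤ y) :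
    HasSum (fun j => digitPenalty (q + 1) (j + 1) * transferWeight j y)
      ((1 + y)⁻¹ - (1 - exp (-1)) * transferWeight q y) := by
  have hterm : ∀ j, digitPenalty (q + 1) (j + 1) * transferWeight j y =
      transferWeight j y - if j = q then (1 - exp (-1)) * transferWeight q y else 0 := fun j => by
    by_cases h : j = q
    · subst h; simp only [digitPenalty, if_true]; ring
    · simp [digitPenalty, h]
  simpa only [hterm] using
    (hasSum_transferWeight hy).sub (hasSum_ite_eq q ((1 - exp (-1)) * transferWeight q y))

lemma two_mul_digitRate_mul_le (q : ℕ) {y : ℝ} (hy0 : 0 ≤ y) (hy1 : y ≤ 1) :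
    2 * digitRate (q + 1) * (1 + y)⁻¹ ≤ (1 - exp (-1)) * transferWeight q y := by
  have hlhs : 2 * digitRate (q + 1) * (1 + y)⁻¹ =
      (1 - exp (-1)) / ((((q : ℝ) + 2) * ((q : ℝ) + 3)) * (1 + y)) := by
    rw [digitRate]; push_cast; field_simp; ring
  rw [hlhs, transferWeight, ← div_eq_mul_inv]
  have hq : (0 : ℝ) ≤ q := q.cast_nonneg
  have h1 : (q : ℝ) + 1 + y ≤ ((q : ℝ) + 2) * (1 + y) := by nlinarith
  have h2 : (q : ℝ) + 2 + y ≤ (q : ℝ) + 3 := by linarith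
  exact div_le_div_of_nonneg_left (sub_nonneg.2 (exp_le_one_iff.2 (by norm_num)))
    (by positivity) (by nlinarith [mul_le_mul h1 h2 (by positivity) (by positivity)])

lemma tsum_digitPenalty_mul_transferWeight_le {p : ℕ} (hp : 0 < p) {y : ℝ}
    (hy : y ∈ Icc (0 : ℝ) 1) :
    ∑' j, ENNReal.ofReal (digitPenalty p (j + 1)) * ENNReal.ofReal (transferWeight j y) ≤
      ENNReal.ofReal (1 - 2 * digitRate p) * gaussDensity y := by
  obtain ⟨q, rfl⟩ : ∃ q, p = q + 1 := ⟨p - 1, by omega⟩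
  have hsum := hasSum_digitPenalty_mul_transferWeight q hy.1
  calc ∑' j, ENNReal.ofReal (digitPenalty (q + 1) (j + 1)) * ENNReal.ofReal (transferWeight j y)
      = ENNReal.ofReal (∑' j, digitPenalty (q + 1) (j + 1) * transferWeight j y) := by
        simp_rw [← ENNReal.ofReal_mul (digitPenalty_nonneg _ _)]
        exact (ENNReal.ofReal_tsum_of_nonneg
          (fun j => mul_nonneg (digitPenalty_nonneg _ _) (transferWeight_nonneg j hy.1))
          hsum.summable).symm
    _ ≤ ENNReal.ofReal ((1 - 2 * digitRate (q + 1)) * (1 + y)⁻¹) := by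
        rw [hsum.tsum_eq]
        exact ENNReal.ofReal_le_ofReal
          (by linear_combination two_mul_digitRate_mul_le q hy.1 hy.2)
    _ = ENNReal.ofReal (1 - 2 * digitRate (q + 1)) * gaussDensity y :=
        ENNReal.ofReal_mul (sub_nonneg.2 (two_mul_digitRate_le_one _))

lemma gaussDensity_le_one {x : ℝ} (hx : 0 ≤ x) : gaussDensity x ≤ 1 :=
  ENNReal.ofReal_le_one.2 (inv_le_one_of_one_le₀ (by linarith))

lemma one_le_two_mul_gaussDensity {x : ℝ} (hx : x ∈ Ioc (0 : ℝ) 1) : 1 ≤ 2 * gaussDensity x := by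
  rw [gaussDensity, ← ENNReal.ofReal_ofNat 2, ← ENNReal.ofReal_mul zero_le_two,
    ENNReal.one_le_ofReal, ← div_eq_mul_inv, one_le_div (by linarith [hx.1])]
  linarith [hx.2]

noncomputable def digitCount (p n : ℕ) (x : ℝ) : ℕ :=
  ∑ k ∈ Finset.range n, if cfDigit (gaussMap^[k] x) = p then 1 else 0

lemma measurable_digitCount (p n : ℕ) : Measurable (digitCount p n) :=
  Finset.measurable_sum _ fun k _ => Measurable.ite
    ((measurable_cfDigit.comp (measurable_gaussMap.iterate k)) (measurableSet_singleton p))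
    measurable_const measurable_const

lemma digitCount_succ (p n : ℕ) (x : ℝ) :
    digitCount p (n + 1) x = (if cfDigit x = p then 1 else 0) + digitCount p n (gaussMap x) := by
  simp only [digitCount, Finset.sum_range_succ', iterate_succ_apply, iterate_zero_apply]
  exact add_comm _ _

lemma ofReal_exp_neg_digitCount_succ (p n : ℕ) (x : ℝ) :
    ENNReal.ofReal (exp (-digitCount p (n + 1) x)) = ENNReal.ofReal (digitPenalty p (cfDigit x)) *
      ENNReal.ofReal (exp (-digitCount p n (gaussMap x))) := by
  rw [← ENNReal.ofReal_mul (digitPenalty_nonneg _ _), digitCount_succ, digitPenalty]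
  split_ifs <;> simp [exp_add, mul_comm]

lemma lintegral_exp_neg_digitCount_le {p : ℕ} (hp : 0 < p) (n : ℕ) :
    ∫⁻ x in Ioc 0 1, ENNReal.ofReal (exp (-digitCount p n x)) * gaussDensity x ≤
      ENNReal.ofReal (1 - 2 * digitRate p) ^ n := by
  induction n with
  | zero =>
    simp only [digitCount, Finset.range_zero, Finset.sum_empty, CharP.cast_eq_zero, neg_zero,
      exp_zero, ENNReal.ofReal_one, one_mul, pow_zero]
    calc ∫⁻ x in Ioc 0 1, gaussDensity x ≤ ∫⁻ _ in Ioc (0 : ℝ) 1, 1 :=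
          setLIntegral_mono' measurableSet_Ioc fun x hx => gaussDensity_le_one hx.1.le
      _ = 1 := by simp
  | succ n ih =>
    set G : ℝ → ℝ≥0∞ := fun x => ENNReal.ofReal (exp (-digitCount p n x))
    have hG : Measurable G := by
      have := measurable_digitCount p n
      fun_prop
    calc ∫⁻ x in Ioc 0 1, ENNReal.ofReal (exp (-digitCount p (n + 1) x)) * gaussDensity x
        = ∫⁻ x in Ioc 0 1,
            ENNReal.ofReal (digitPenalty p (cfDigit x)) * G (gaussMap x) * gaussDensity x := by
          simp_rw [ofReal_exp_neg_digitCount_succ, G]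
      _ = ∫⁻ y in Ioo 0 1, (∑' j, ENNReal.ofReal (digitPenalty p (j + 1)) *
            ENNReal.ofReal (transferWeight j y)) * G y :=
            lintegral_comp_gaussMap (fun d => ENNReal.ofReal (digitPenalty p d)) hG
      _ ≤ ∫⁻ y in Ioo 0 1, ENNReal.ofReal (1 - 2 * digitRate p) * (G y * gaussDensity y) :=
          setLIntegral_mono' measurableSet_Ioo fun y hy => by
            grw [tsum_digitPenalty_mul_transferWeight_le hp (Ioo_subset_Icc_self hy)]
            exact (mul_right_comm _ _ _).trans (mul_assoc _ _ _) |>.le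
      _ ≤ ∫⁻ y in Ioc 0 1, ENNReal.ofReal (1 - 2 * digitRate p) * (G y * gaussDensity y) :=
          lintegral_mono_set Ioo_subset_Ioc_self
      _ ≤ ENNReal.ofReal (1 - 2 * digitRate p) * ENNReal.ofReal (1 - 2 * digitRate p) ^ n := by
          rw [lintegral_const_mul' _ _ ENNReal.ofReal_ne_top]
          gcongr
      _ = ENNReal.ofReal (1 - 2 * digitRate p) ^ (n + 1) := (pow_succ' _ _).symm

lemma exp_mul_one_sub_two_mul_le (r : ℝ) : exp r * (1 - 2 * r) ≤ exp (-r) := by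
  calc exp r * (1 - 2 * r) ≤ exp r * exp (-(2 * r)) := by
        gcongr; linarith [add_one_le_exp (-(2 * r))]
    _ = exp (-r) := by rw [← exp_add]; ring_nf

lemma measure_digitCount_le_mul_le {p : ℕ} (hp : 0 < p) (n : ℕ) :
    volume.restrict (Ioc 0 1) {x | (digitCount p n x : ℝ) ≤ digitRate p * n} ≤
      2 * ENNReal.ofReal (exp (-digitRate p)) ^ n := by
  set r := digitRate p
  set f : ℝ → ℝ≥0∞ := fun x =>
    ENNReal.ofReal (exp (r * n)) * 2 * (ENNReal.ofReal (exp (-digitCount p n x)) * gaussDensity x)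
  have hf : Measurable f := by
    have := measurable_digitCount p n
    unfold f gaussDensity; fun_prop
  have hsub : {x | (digitCount p n x : ℝ) ≤ r * n} ≤ᵐ[volume.restrict (Ioc 0 1)] {x | 1 ≤ f x} := by
    filter_upwards [ae_restrict_mem measurableSet_Ioc] with x hx hbad
    have hexp : 1 ≤ ENNReal.ofReal (exp (r * n)) * ENNReal.ofReal (exp (-digitCount p n x)) := by
      rw [← ENNReal.ofReal_mul (exp_pos _).le, ← exp_add, ENNReal.one_le_ofReal]
      exact one_le_exp (by linarith [show (digitCount p n x : ℝ) ≤ r * n from hbad])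
    calc (1 : ℝ≥0∞) ≤ ENNReal.ofReal (exp (r * n)) * ENNReal.ofReal (exp (-digitCount p n x)) *
          (2 * gaussDensity x) := one_le_mul hexp (one_le_two_mul_gaussDensity hx)
      _ = f x := by ring
  calc volume.restrict (Ioc 0 1) {x | (digitCount p n x : ℝ) ≤ r * n}
      ≤ 1 * volume.restrict (Ioc 0 1) {x | 1 ≤ f x} := by rw [one_mul]; exact measure_mono_ae hsub
    _ ≤ ∫⁻ x in Ioc 0 1, f x := mul_meas_ge_le_lintegral₀ hf.aemeasurable 1
    _ ≤ ENNReal.ofReal (exp (r * n)) * 2 * ENNReal.ofReal (1 - 2 * r) ^ n := by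
        rw [lintegral_const_mul' _ _ (by finiteness)]
        gcongr
        exact lintegral_exp_neg_digitCount_le hp n
    _ = 2 * ENNReal.ofReal (exp r * (1 - 2 * r)) ^ n := by
        rw [ENNReal.ofReal_mul (exp_pos _).le, mul_pow, ← ENNReal.ofReal_pow (exp_pos _).le,
          ← exp_nat_mul, mul_comm (n : ℝ)]
        ring
    _ ≤ 2 * ENNReal.ofReal (exp (-r)) ^ n := by
        gcongr
        exact exp_mul_one_sub_two_mul_le r

lemma ae_eventually_digitRate_mul_lt_digitCount {p : ℕ} (hp : 0 < p) :
    ∀ᵐ x ∂volume.restrict (Ioc 0 1), ∀ᶠ n in atTop, digitRate p * n < digitCount p n x := by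
  have hratio : ENNReal.ofReal (exp (-digitRate p)) < 1 :=
    ENNReal.ofReal_lt_one.2 (exp_lt_one_iff.2 (neg_lt_zero.2 (digitRate_pos p)))
  have hsum : ∑' n, volume.restrict (Ioc 0 1) {x | (digitCount p n x : ℝ) ≤ digitRate p * n} ≠ ∞ :=
    ne_top_of_le_ne_top
      (by rw [ENNReal.tsum_mul_left, ENNReal.tsum_geometric]
          exact ENNReal.mul_ne_top (by norm_num) (ENNReal.inv_ne_top.2 (tsub_pos_of_lt hratio).ne'))
      (ENNReal.tsum_le_tsum (measure_digitCount_le_mul_le hp))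
  filter_upwards [ae_eventually_notMem hsum] with x hx
  filter_upwards [hx] with n hn
  exact not_le.1 hn

lemma exists_primes_lt_sum_mul_digitRate (b : ℝ) :
    ∃ P : Finset ℕ, (∀ p ∈ P, p.Prime) ∧ b < ∑ p ∈ P, (p : ℝ) * digitRate p := by
  by_contra! h
  set g := indicator {p : ℕ | p.Prime} fun p => (p : ℝ) * digitRate p
  have hg_nonneg : 0 ≤ g :=
    indicator_nonneg fun p _ => mul_nonneg p.cast_nonneg (digitRate_pos p).le
  have hg : Summable g := summable_of_sum_le hg_nonneg fun u => by
    rw [Finset.sum_indicator_eq_sum_filter]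
    exact h _ fun p hp => (Finset.mem_filter.1 hp).2
  refine not_summable_one_div_on_primes <| (hg.mul_left (12 / (1 - exp (-1)))).of_nonneg_of_le
    (indicator_nonneg fun p _ => by positivity) fun p => ?_
  by_cases hp : p.Prime
  · have hp1 : (1 : ℝ) ≤ p := by exact_mod_cast hp.one_le
    have hδ : 0 < 1 - exp (-1) := sub_pos.2 (exp_lt_one_iff.2 (by norm_num))
    simp only [g, indicator_of_mem (show p ∈ {p : ℕ | p.Prime} from hp), digitRate]
    rw [div_le_iff₀ (by positivity)]
    field_simp
    nlinarith
  · simp [g, indicator_of_notMem (show p ∉ {p : ℕ | p.Prime} from hp)]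

lemma sum_mul_digitCount_le {P : Finset ℕ} (hP : ∀ p ∈ P, p.Prime) (n : ℕ) (x : ℝ) :
    ∑ p ∈ P, p * digitCount p n x ≤ ∑ k ∈ Finset.range n, primeDigitVal (gaussMap^[k] x) := by
  simp only [digitCount, Finset.mul_sum, mul_ite, mul_one, mul_zero]
  rw [Finset.sum_comm]
  gcongr with k
  rw [Finset.sum_ite_eq]
  split_ifs with hmem
  · rw [primeDigitVal, if_pos (hP _ hmem)]
  · exact Nat.zero_le _

theorem stmt_11 :
    ∀ᵐ x ∂(volume.restrict (Set.Ioc (0:ℝ) 1)),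
      Tendsto (fun n : ℕ =>
          (∑ k ∈ Finset.range n, (primeDigitVal (gaussMap^[k] x) : ℝ)) / n)
        atTop atTop := by
  have hcount : ∀ᵐ x ∂volume.restrict (Ioc 0 1),
      ∀ p : Nat.Primes, ∀ᶠ n in atTop, digitRate p * n < digitCount p n x :=
    ae_all_iff.2 fun p => ae_eventually_digitRate_mul_lt_digitCount p.2.pos
  filter_upwards [hcount] with x hx
  refine tendsto_atTop.2 fun b => ?_
  obtain ⟨P, hP, hb⟩ := exists_primes_lt_sum_mul_digitRate b
  have hev : ∀ᶠ n in atTop, 0 < n ∧ ∀ p ∈ P, digitRate p * n < digitCount p n x :=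
    (eventually_gt_atTop 0).and ((Finset.eventually_all P).2 fun p hp => hx ⟨p, hP p hp⟩)
  filter_upwards [hev] with n ⟨hn, hlt⟩
  have hn' : (0 : ℝ) < n := by exact_mod_cast hn
  calc b ≤ ∑ p ∈ P, (p : ℝ) * digitRate p := hb.le
    _ ≤ ∑ p ∈ P, (p : ℝ) * (digitCount p n x / n) := by
        gcongr with p hp
        exact (le_div_iff₀ hn').2 (hlt p hp).le
    _ = (∑ p ∈ P, p * digitCount p n x : ℕ) / n := by
        simp only [Finset.sum_div, Nat.cast_sum, Nat.cast_mul, mul_div_assoc]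
    _ ≤ (∑ k ∈ Finset.range n, (primeDigitVal (gaussMap^[k] x) : ℝ)) / n := by
        gcongr
        exact_mod_cast sum_mul_digitCount_le hP n x
end
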